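/- arXiv:math/0302280 — 5 statements merged into one kernel-verified Lean document; each statement's English description precedes it below -/
import Mathlib

section
/- Let F be the free group on two generators a, b, g = a²b⁻¹ab, and h = a²bab⁻¹. Then for every homomorphism ρ : F → SL(2,ℂ), tr(ρ(g)) = tr(ρ(a))·( tr(ρ(ab))·tr(ρ(ab⁻¹)) − tr(ρ(b²)) ) − tr(ρ(a)). -/
open Matrix

theorem horowitz_trace_formula
    (a b : FreeGroup Bool)
    (ha : a = FreeGroup.of true) (hb : b = FreeGroup.of false)
    (g : FreeGroup Bool) (hg : g = a ^ 2 * b⁻¹ * a * b)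
    (ρ : FreeGroup Bool →* Matrix.SpecialLinearGroup (Fin 2) ℂ) :
    Matrix.trace ((ρ g : Matrix (Fin 2) (Fin 2) ℂ))
      = Matrix.trace ((ρ a : Matrix (Fin 2) (Fin 2) ℂ))
          * (Matrix.trace ((ρ (a * b) : Matrix (Fin 2) (Fin 2) ℂ))
              * Matrix.trace ((ρ (a * b⁻¹) : Matrix (Fin 2) (Fin 2) ℂ))
            - Matrix.trace ((ρ (b ^ 2) : Matrix (Fin 2) (Fin 2) ℂ)))
        - Matrix.trace ((ρ a : Matrix (Fin 2) (Fin 2) ℂ)) := by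
  subst hg
  have hA : Matrix.det ((ρ a : Matrix (Fin 2) (Fin 2) ℂ)) = 1 := (ρ a).2
  have hB : Matrix.det ((ρ b : Matrix (Fin 2) (Fin 2) ℂ)) = 1 := (ρ b).2
  simp only [_root_.map_mul, _root_.map_pow, _root_.map_inv, Matrix.SpecialLinearGroup.coe_mul,
    Matrix.SpecialLinearGroup.coe_pow, Matrix.SpecialLinearGroup.coe_inv]
  set A := ((ρ a : Matrix.SpecialLinearGroup (Fin 2) ℂ) : Matrix (Fin 2) (Fin 2) ℂ) with hAdef
  set B := ((ρ b : Matrix.SpecialLinearGroup (Fin 2) ℂ) : Matrix (Fin 2) (Fin 2) ℂ) with hBdef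
  rw [Matrix.det_fin_two] at hA hB
  simp only [Matrix.trace_fin_two, Matrix.mul_apply, Fin.sum_univ_two, pow_two,
    Matrix.adjugate_fin_two, Matrix.cons_val', Matrix.cons_val_zero, Matrix.cons_val_one,
    Matrix.head_cons, Matrix.empty_val', Matrix.cons_val_fin_one, Matrix.head_fin_const]
  simp only [Matrix.of_apply, Matrix.cons_val_zero, Matrix.cons_val_one, Matrix.head_cons]
  set a0 := A 0 0; set a1 := A 0 1; set a2 := A 1 0; set a3 := A 1 1
  set b0 := B 0 0; set b1 := B 0 1; set b2 := B 1 0; set b3 := B 1 1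
  linear_combination (-a3*b3^2 - a3*b1*b2 - a3*b0*b3 - a3*b0^2 - a0*b3^2 - a0*b1*b2
      - a0*b0*b3 - a0*b0^2) * hA + (-a3 - a0) * hB
end

section
/- Let γ, γ' be elements of a group G such that for every homomorphism ρ : G → SL(2,ℂ), tr(ρ(γ))² = tr(ρ(γ'))². Then for every homomorphism φ : G → ℤ, φ(γ) = φ(γ') or φ(γ) = −φ(γ'). -/
open Matrix

noncomputable def psiAux (n : ℤ) : Matrix.SpecialLinearGroup (Fin 2) ℂ :=
  ⟨Matrix.diagonal ![(2:ℂ) ^ n, (2:ℂ) ^ (-n)], by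
    simp [Matrix.det_diagonal, Fin.prod_univ_two, mul_inv_cancel₀,
      zpow_ne_zero, (two_ne_zero (α := ℂ))]⟩

noncomputable def psiHom : Multiplicative ℤ →* Matrix.SpecialLinearGroup (Fin 2) ℂ where
  toFun n := psiAux (Multiplicative.toAdd n)
  map_one' := by
    apply Subtype.ext
    show Matrix.diagonal _ = (1 : Matrix (Fin 2) (Fin 2) ℂ)
    ext i j
    fin_cases i <;> fin_cases j <;> simp [psiAux, Matrix.one_apply]
  map_mul' a b := by
    apply Subtype.ext
    simp only [psiAux, Matrix.SpecialLinearGroup.coe_mul, toAdd_mul]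
    show _ = Matrix.diagonal _ * Matrix.diagonal _
    rw [Matrix.diagonal_mul_diagonal]
    ext i j
    fin_cases i <;> fin_cases j <;>
      simp [Matrix.diagonal, zpow_add₀ (two_ne_zero (α := ℂ)), mul_comm]

lemma psiHom_trace (n : Multiplicative ℤ) :
    Matrix.trace ((psiHom n : Matrix (Fin 2) (Fin 2) ℂ))
      = (2:ℂ) ^ (Multiplicative.toAdd n) + (2:ℂ) ^ (-(Multiplicative.toAdd n)) := by
  show Matrix.trace (Matrix.diagonal ![(2:ℂ) ^ (Multiplicative.toAdd n), (2:ℂ) ^ (-(Multiplicative.toAdd n))]) = _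
  simp [psiHom, psiAux, Matrix.trace, Fin.sum_univ_two]

theorem trace_eq_implies_hom_eq_up_to_sign
    (G : Type*) [Group G] (γ γ' : G)
    (htr : ∀ ρ : G →* Matrix.SpecialLinearGroup (Fin 2) ℂ,
        (Matrix.trace ((ρ γ : Matrix (Fin 2) (Fin 2) ℂ))) ^ 2
          = (Matrix.trace ((ρ γ' : Matrix (Fin 2) (Fin 2) ℂ))) ^ 2)
    (φ : G →* Multiplicative ℤ) :
    φ γ = φ γ' ∨ φ γ = (φ γ')⁻¹ := by
  set a : ℤ := Multiplicative.toAdd (φ γ) with ha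
  set b : ℤ := Multiplicative.toAdd (φ γ') with hb
  have h := htr (psiHom.comp φ)
  rw [MonoidHom.comp_apply, MonoidHom.comp_apply, psiHom_trace, psiHom_trace] at h
  -- move to ℝ
  have hR : ((2:ℝ) ^ a + (2:ℝ) ^ (-a)) ^ 2 = ((2:ℝ) ^ b + (2:ℝ) ^ (-b)) ^ 2 := by
    have := h
    have hcast : ∀ n : ℤ, ((2:ℂ) ^ n) = (((2:ℝ) ^ n : ℝ) : ℂ) := by
      intro n; push_cast; ring
    rw [hcast a, hcast (-a), hcast b, hcast (-b)] at this
    exact_mod_cast this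
  have h2 : (0:ℝ) < 2 := by norm_num
  have hxa : (0:ℝ) < (2:ℝ) ^ a := zpow_pos h2 a
  have hxa' : (0:ℝ) < (2:ℝ) ^ (-a) := zpow_pos h2 _
  have hxb : (0:ℝ) < (2:ℝ) ^ b := zpow_pos h2 b
  have hxb' : (0:ℝ) < (2:ℝ) ^ (-b) := zpow_pos h2 _
  have hsum : (2:ℝ) ^ a + (2:ℝ) ^ (-a) = (2:ℝ) ^ b + (2:ℝ) ^ (-b) := by
    nlinarith [hxa, hxa', hxb, hxb']
  set x := (2:ℝ) ^ a with hx
  set y := (2:ℝ) ^ b with hy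
  have hinvx : (2:ℝ) ^ (-a) = x⁻¹ := by rw [hx, _root_.zpow_neg]
  have hinvy : (2:ℝ) ^ (-b) = y⁻¹ := by rw [hy, _root_.zpow_neg]
  rw [hinvx, hinvy] at hsum
  have hxne : x ≠ 0 := ne_of_gt hxa
  have hyne : y ≠ 0 := ne_of_gt hxb
  have key : (x - y) * (x * y - 1) = 0 := by
    have h' : x * (x * y) + y = y * (x * y) + x := by
      field_simp at hsum
      nlinarith [hsum]
    nlinarith [h']
  have hinj : Function.Injective (fun n : ℤ => (2:ℝ) ^ n) :=
    zpow_right_injective₀ (by norm_num) (by norm_num)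
  rcases mul_eq_zero.mp key with hc | hc
  · left
    have hab : a = b := hinj (by simpa [hx, hy] using sub_eq_zero.mp hc)
    have : Multiplicative.toAdd (φ γ) = Multiplicative.toAdd (φ γ') := by
      rw [← ha, ← hb, hab]
    exact Multiplicative.toAdd.injective this
  · right
    have hxy : x * y = 1 := by linarith [sub_eq_zero.mp hc]
    have : (2:ℝ) ^ (a + b) = (2:ℝ) ^ (0:ℤ) := by
      rw [zpow_add₀ (by norm_num : (2:ℝ) ≠ 0)]
      simpa [hx, hy] using hxy
    have hab : a = -b := by have := hinj this; omega
    have : Multiplicative.toAdd (φ γ) = Multiplicative.toAdd ((φ γ')⁻¹) := by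
      rw [← ha, toAdd_inv, ← hb, hab]
    exact Multiplicative.toAdd.injective this
end

section
/- Let z₁, …, z_k be nonzero complex numbers, no two of which lie on the same real line through 0 (i.e. z_i/z_j ∉ ℝ for i ≠ j). Define H(θ) = Σ_{j=1}^{k} |Im(e^{iθ} z_j)|. Then H is continuous, π-periodic, and the set of points in (0, π] where H fails to be differentiable has exactly k elements; moreover the sum over these points θ_l of (right derivative of H at θ_l minus left derivative of H at θ_l) equals 2·Σ_{j=1}^{k} |z_j|. -/
open Complex Set Real

private lemma aux_im (θ : ℝ) (w : ℂ) :
    (Complex.exp (↑θ * Complex.I) * w).im = ‖w‖ * Real.sin (θ + Complex.arg w) := by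
  rw [Complex.mul_im, Complex.exp_ofReal_mul_I_re, Complex.exp_ofReal_mul_I_im, Real.sin_add]
  have h1 := Complex.norm_mul_cos_arg w
  have h2 := Complex.norm_mul_sin_arg w
  linear_combination (-Real.sin θ) * h1 + (-Real.cos θ) * h2

private lemma aux_diff (c φ0 θ : ℝ) (h : Real.sin (θ + φ0) ≠ 0) :
    DifferentiableAt ℝ (fun x => c * |Real.sin (x + φ0)|) θ := by
  have h1 : HasDerivAt (fun x => Real.sin (x + φ0)) (Real.cos (θ + φ0)) θ := by
    simpa using ((hasDerivAt_id θ).add_const φ0).sin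
  have h2 := (hasDerivAt_abs h).comp θ h1
  exact ((h2.const_mul c)).differentiableAt

private lemma aux_abs_sin_right (θ : ℝ) :
    HasDerivWithinAt (fun x => |Real.sin (x - θ)|) 1 (Set.Ici θ) θ := by
  have hd : HasDerivAt (fun x => Real.sin (x - θ)) 1 θ := by
    simpa using ((hasDerivAt_id θ).sub_const θ).sin
  refine hd.hasDerivWithinAt.congr_of_eventuallyEq ?_ (by simp)
  filter_upwards [self_mem_nhdsWithin,
    nhdsWithin_le_nhds (Iio_mem_nhds (by linarith [Real.pi_pos] : θ < θ + Real.pi))] with x hx hx'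
  have hx1 : θ ≤ x := hx
  have hx2 : x < θ + Real.pi := hx'
  exact abs_of_nonneg (Real.sin_nonneg_of_nonneg_of_le_pi (by linarith) (by linarith))

private lemma aux_abs_sin_left (θ : ℝ) :
    HasDerivWithinAt (fun x => |Real.sin (x - θ)|) (-1) (Set.Iic θ) θ := by
  have hd : HasDerivAt (fun x => -Real.sin (x - θ)) (-1) θ := by
    simpa [Pi.neg_def] using (((hasDerivAt_id θ).sub_const θ).sin).neg
  refine hd.hasDerivWithinAt.congr_of_eventuallyEq ?_ (by simp)
  filter_upwards [self_mem_nhdsWithin,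
    nhdsWithin_le_nhds (Ioi_mem_nhds (by linarith [Real.pi_pos] : θ - Real.pi < θ))] with x hx hx'
  have hx1 : x ≤ θ := hx
  have hx2 : θ - Real.pi < x := hx'
  have h1 : Real.sin (x - θ) ≤ 0 := by
    have h0 : 0 ≤ Real.sin (θ - x) :=
      Real.sin_nonneg_of_nonneg_of_le_pi (by linarith) (by linarith)
    rw [show x - θ = -(θ - x) by ring, Real.sin_neg]
    linarith
  rw [abs_of_nonpos h1]

private lemma aux_shift (φ0 θ : ℝ) (h : Real.sin (θ + φ0) = 0) :
    ∀ x : ℝ, |Real.sin (x + φ0)| = |Real.sin (x - θ)| := by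
  obtain ⟨n, hn⟩ := Real.sin_eq_zero_iff.mp h
  intro x
  rw [show x + φ0 = (x - θ) + (n : ℝ) * Real.pi by linarith, Real.sin_add_int_mul_pi]
  rcases Int.even_or_odd n with he | ho
  · rw [he.neg_one_zpow, one_mul]
  · rw [ho.neg_one_zpow, neg_one_mul, _root_.abs_neg]

private lemma aux_right (c φ0 θ : ℝ) (h : Real.sin (θ + φ0) = 0) :
    HasDerivWithinAt (fun x => c * |Real.sin (x + φ0)|) c (Set.Ici θ) θ := by
  simp only [aux_shift φ0 θ h]
  simpa using (aux_abs_sin_right θ).const_mul c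

private lemma aux_left (c φ0 θ : ℝ) (h : Real.sin (θ + φ0) = 0) :
    HasDerivWithinAt (fun x => c * |Real.sin (x + φ0)|) (-c) (Set.Iic θ) θ := by
  simp only [aux_shift φ0 θ h]
  have := (aux_abs_sin_left θ).const_mul c
  simpa [mul_comm] using this

private lemma aux_nondiff (c φ0 θ : ℝ) (hc : c ≠ 0) (h : Real.sin (θ + φ0) = 0) :
    ¬ DifferentiableAt ℝ (fun x => c * |Real.sin (x + φ0)|) θ := by
  intro hd
  have h1 := (aux_right c φ0 θ h).derivWithin (uniqueDiffOn_Ici θ θ Set.self_mem_Ici)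
  have h2 := (hd.hasDerivAt.hasDerivWithinAt).derivWithin (uniqueDiffOn_Ici θ θ Set.self_mem_Ici)
  have h3 := (aux_left c φ0 θ h).derivWithin (uniqueDiffOn_Iic θ θ Set.self_mem_Iic)
  have h4 := (hd.hasDerivAt.hasDerivWithinAt).derivWithin (uniqueDiffOn_Iic θ θ Set.self_mem_Iic)
  apply hc
  linarith

theorem total_height_singularity_structure
    (k : ℕ) (z : Fin k → ℂ) (hz : ∀ j, z j ≠ 0)
    (hdist : ∀ i j, i ≠ j → ¬ ∃ r : ℝ, z i = (r : ℂ) * z j)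
    (H : ℝ → ℝ)
    (hH : ∀ θ : ℝ, H θ = ∑ j, |(Complex.exp (θ * Complex.I) * z j).im|) :
    Continuous H ∧
    (∀ θ : ℝ, H (θ + Real.pi) = H θ) ∧
    ∃ s : Finset ℝ,
      (↑s = {θ : ℝ | θ ∈ Set.Ioc 0 Real.pi ∧ ¬ DifferentiableAt ℝ H θ}) ∧
      s.card = k ∧
      ∃ Dplus Dminus : ℝ → ℝ,
        (∀ θ ∈ s, HasDerivWithinAt H (Dplus θ) (Set.Ici θ) θ ∧
            HasDerivWithinAt H (Dminus θ) (Set.Iic θ) θ) ∧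
        ∑ θ ∈ s, (Dplus θ - Dminus θ) = 2 * ∑ j, ‖z j‖ := by
  have hHfun : H = fun θ => ∑ j, ‖z j‖ * |Real.sin (θ + Complex.arg (z j))| := by
    funext θ
    rw [hH]
    refine Finset.sum_congr rfl fun j _ => ?_
    rw [aux_im, abs_mul, _root_.abs_of_nonneg (norm_nonneg (z j))]
  subst hHfun
  -- the singular points
  set T : Fin k → ℝ := fun j => toIocMod Real.pi_pos 0 (-(Complex.arg (z j))) with hT
  have hTmem : ∀ j, T j ∈ Set.Ioc 0 Real.pi := by
    intro j
    have := toIocMod_mem_Ioc Real.pi_pos 0 (-(Complex.arg (z j)))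
    simpa using this
  have hTzero : ∀ j, Real.sin (T j + Complex.arg (z j)) = 0 := by
    intro j
    obtain ⟨-, n, hn⟩ := (toIocMod_eq_iff Real.pi_pos).mp (rfl :
      toIocMod Real.pi_pos 0 (-(Complex.arg (z j))) = T j)
    rw [zsmul_eq_mul] at hn
    refine Real.sin_eq_zero_iff.mpr ⟨-n, ?_⟩
    push_cast
    linarith
  have huniq : ∀ θ ∈ Set.Ioc 0 Real.pi, ∀ j, Real.sin (θ + Complex.arg (z j)) = 0 → θ = T j := by
    intro θ hθ j h0
    obtain ⟨n, hn⟩ := Real.sin_eq_zero_iff.mp h0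
    refine ((toIocMod_eq_iff Real.pi_pos).mpr ⟨by simpa using hθ, ⟨-n, ?_⟩⟩).symm
    rw [zsmul_eq_mul]
    push_cast
    linarith
  have hkey : ∀ i j, T i = T j → ∃ r : ℝ, z i = (r : ℂ) * z j := by
    intro i j hij
    obtain ⟨n, hn⟩ := Real.sin_eq_zero_iff.mp (hTzero i)
    obtain ⟨m, hm⟩ := Real.sin_eq_zero_iff.mp (hTzero j)
    have hφ : Complex.arg (z i) = Complex.arg (z j) + ((n : ℝ) - m) * Real.pi := by
      rw [hij] at hn
      linarith
    have e1 := Complex.norm_mul_exp_arg_mul_I (z i)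
    have e2 := Complex.norm_mul_exp_arg_mul_I (z j)
    have hexp : Complex.exp ((Complex.arg (z i) : ℂ) * Complex.I) =
        Complex.exp ((Complex.arg (z j) : ℂ) * Complex.I) * (-1 : ℂ) ^ (n - m) := by
      rw [← Complex.exp_pi_mul_I, ← Complex.exp_int_mul, ← Complex.exp_add]
      congr 1
      have : (Complex.arg (z i) : ℂ) = (Complex.arg (z j) : ℂ) + ((n : ℂ) - m) * (Real.pi : ℂ) := by
        rw [hφ]; push_cast; ring
      rw [this]
      push_cast
      ring
    have haj : (‖z j‖ : ℂ) ≠ 0 := by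
      exact_mod_cast norm_ne_zero_iff.mpr (hz j)
    refine ⟨‖z i‖ / ‖z j‖ * (-1 : ℝ) ^ (n - m), ?_⟩
    push_cast
    rw [div_mul_eq_mul_div, div_mul_eq_mul_div, eq_div_iff haj]
    linear_combination (‖z i‖ : ℂ) * (‖z j‖ : ℂ) * hexp
      - (‖z j‖ : ℂ) * e1 + (‖z i‖ : ℂ) * (-1 : ℂ) ^ (n - m) * e2
  have hTinj : Function.Injective T := by
    intro i j hij
    by_contra hne
    exact hdist i j hne (hkey i j hij)
  have honly : ∀ l j, Real.sin (T l + Complex.arg (z j)) = 0 → j = l := by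
    intro l j h0
    exact (hTinj (huniq (T l) (hTmem l) j h0)).symm
  have hnd : ∀ l, ¬ DifferentiableAt ℝ
      (fun θ => ∑ j, ‖z j‖ * |Real.sin (θ + Complex.arg (z j))|) (T l) := by
    intro l hdiff
    have hrest : DifferentiableAt ℝ
        (fun x => ∑ j ∈ Finset.univ.erase l,
          ‖z j‖ * |Real.sin (x + Complex.arg (z j))|) (T l) := by
      refine DifferentiableAt.fun_sum fun j hj => aux_diff _ _ _ fun h0 => ?_
      exact (Finset.mem_erase.mp hj).1 (honly l j h0)
    have hFl : DifferentiableAt ℝ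
        (fun x => ‖z l‖ * |Real.sin (x + Complex.arg (z l))|) (T l) := by
      have heq : (fun x => ‖z l‖ * |Real.sin (x + Complex.arg (z l))|)
          = fun x => (∑ j, ‖z j‖ * |Real.sin (x + Complex.arg (z j))|)
            - ∑ j ∈ Finset.univ.erase l,
                ‖z j‖ * |Real.sin (x + Complex.arg (z j))| := by
        funext x
        rw [← Finset.add_sum_erase _ _ (Finset.mem_univ l)]
        ring
      rw [heq]
      exact hdiff.sub hrest
    exact aux_nondiff _ _ _ (norm_ne_zero_iff.mpr (hz l)) (hTzero l) hFl
  refine ⟨?_, ?_, ?_⟩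
  · exact continuous_finset_sum _ fun j _ =>
      continuous_const.mul ((Real.continuous_sin.comp (continuous_id.add continuous_const)).abs)
  · intro θ
    refine Finset.sum_congr rfl fun j _ => ?_
    rw [show θ + Real.pi + Complex.arg (z j) = (θ + Complex.arg (z j)) + Real.pi by ring,
      Real.sin_add_pi, abs_neg]
  refine ⟨Finset.image T Finset.univ, ?_, ?_, ?_⟩
  · ext θ
    simp only [Finset.coe_image, Finset.coe_univ, Set.image_univ, Set.mem_range, Set.mem_setOf_eq]
    constructor
    · rintro ⟨l, rfl⟩
      exact ⟨hTmem l, hnd l⟩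
    · rintro ⟨hmem, hndθ⟩
      by_contra hc
      push_neg at hc
      refine hndθ (DifferentiableAt.fun_sum fun j _ => aux_diff _ _ _ fun h0 => ?_)
      exact hc j (huniq θ hmem j h0).symm
  · rw [Finset.card_image_of_injective _ hTinj, Finset.card_univ, Fintype.card_fin]
  refine ⟨fun θ => ∑ j, if Real.sin (θ + Complex.arg (z j)) = 0 then ‖z j‖
      else deriv (fun x => ‖z j‖ * |Real.sin (x + Complex.arg (z j))|) θ,
    fun θ => ∑ j, if Real.sin (θ + Complex.arg (z j)) = 0 then -(‖z j‖)
      else deriv (fun x => ‖z j‖ * |Real.sin (x + Complex.arg (z j))|) θ, ?_, ?_⟩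
  · intro θ _
    constructor
    · refine HasDerivWithinAt.fun_sum fun j _ => ?_
      by_cases h : Real.sin (θ + Complex.arg (z j)) = 0
      · simp only [if_pos h]
        exact aux_right _ _ _ h
      · simp only [if_neg h]
        exact ((aux_diff _ _ _ h).hasDerivAt).hasDerivWithinAt
    · refine HasDerivWithinAt.fun_sum fun j _ => ?_
      by_cases h : Real.sin (θ + Complex.arg (z j)) = 0
      · simp only [if_pos h]
        exact aux_left _ _ _ h
      · simp only [if_neg h]
        exact ((aux_diff _ _ _ h).hasDerivAt).hasDerivWithinAt
  · rw [Finset.sum_image (fun i _ j _ h => hTinj h), Finset.mul_sum]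
    refine Finset.sum_congr rfl fun l _ => ?_
    rw [← Finset.sum_sub_distrib]
    have hterm : ∀ j : Fin k,
        ((if Real.sin (T l + Complex.arg (z j)) = 0 then ‖z j‖
            else deriv (fun x => ‖z j‖ * |Real.sin (x + Complex.arg (z j))|) (T l)) -
         (if Real.sin (T l + Complex.arg (z j)) = 0 then -(‖z j‖)
            else deriv (fun x => ‖z j‖ * |Real.sin (x + Complex.arg (z j))|) (T l)))
        = if j = l then 2 * ‖z j‖ else 0 := by
      intro j
      by_cases h : Real.sin (T l + Complex.arg (z j)) = 0
      · have hje : j = l := honly l j h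
        rw [if_pos h, if_pos h, if_pos hje]
        ring
      · have hje : j ≠ l := fun e => h (e ▸ hTzero l)
        rw [if_neg h, if_neg h, if_neg hje]
        ring
    rw [Finset.sum_congr rfl fun j _ => hterm j,
      Finset.sum_ite_eq' Finset.univ l (fun j => 2 * ‖z j‖)]
    simp
end

section
/- Let z₁, …, z_k be complex numbers and define H(θ) = Σ_{j=1}^{k} |Im(e^{iθ} z_j)|. Suppose θ₁, …, θ_n are the points in (0, π] at which H is not differentiable. Then Σ_{j=1}^{k} |z_j| = (1/2) Σ_{l=1}^{n} ( lim_{θ→θ_l⁺} H'(θ) − lim_{θ→θ_l⁻} H'(θ) ), where the one-sided limits of the derivative exist. -/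
open Complex Set Real Filter

noncomputable def epsR (p b : ℝ) : ℝ :=
  if Real.sin (p + b) = 0 then Real.cos (p + b)
  else if 0 < Real.sin (p + b) then 1 else -1

noncomputable def epsL (p b : ℝ) : ℝ :=
  if Real.sin (p + b) = 0 then -Real.cos (p + b)
  else if 0 < Real.sin (p + b) then 1 else -1

lemma cos_one_or_neg_one {x : ℝ} (h : Real.sin x = 0) :
    Real.cos x = 1 ∨ Real.cos x = -1 := by
  have h1 := Real.sin_sq_add_cos_sq x
  have h2 : (Real.cos x - 1) * (Real.cos x + 1) = 0 := by nlinarith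
  rcases mul_eq_zero.1 h2 with h3 | h3
  · left; linarith
  · right; linarith

lemma epsR_spec (p b : ℝ) :
    ∀ᶠ θ in nhdsWithin p (Set.Ioi p), |Real.sin (θ + b)| = epsR p b * Real.sin (θ + b) := by
  rcases lt_trichotomy (Real.sin (p + b)) 0 with h | h | h
  · have hc : ContinuousAt (fun θ : ℝ => Real.sin (θ + b)) p := by fun_prop
    have hev : ∀ᶠ θ in nhds p, Real.sin (θ + b) < 0 :=
      hc.eventually_lt_const h
    refine eventually_nhdsWithin_of_eventually_nhds (hev.mono fun θ hθ => ?_)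
    rw [epsR, if_neg (ne_of_lt h), if_neg (not_lt.mpr (le_of_lt h)), abs_of_neg hθ]
    ring
  · refine Filter.eventually_of_mem (Ioo_mem_nhdsGT_of_mem ⟨le_refl p, lt_add_of_pos_right p Real.pi_pos⟩) ?_
    intro θ hθ
    have h1 : θ + b = (θ - p) + (p + b) := by ring
    rw [epsR, if_pos h, h1, Real.sin_add, h, mul_zero, add_zero]
    have hs : 0 < Real.sin (θ - p) :=
      Real.sin_pos_of_pos_of_lt_pi (by linarith [hθ.1]) (by linarith [hθ.2])
    rcases cos_one_or_neg_one h with h2 | h2 <;> simp [h2, abs_of_pos hs]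
  · have hc : ContinuousAt (fun θ : ℝ => Real.sin (θ + b)) p := by fun_prop
    have hev : ∀ᶠ θ in nhds p, 0 < Real.sin (θ + b) :=
      hc.eventually_const_lt h
    refine eventually_nhdsWithin_of_eventually_nhds (hev.mono fun θ hθ => ?_)
    rw [epsR, if_neg (ne_of_gt h), if_pos h, abs_of_pos hθ, one_mul]

lemma epsL_spec (p b : ℝ) :
    ∀ᶠ θ in nhdsWithin p (Set.Iio p), |Real.sin (θ + b)| = epsL p b * Real.sin (θ + b) := by
  rcases lt_trichotomy (Real.sin (p + b)) 0 with h | h | h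
  · have hc : ContinuousAt (fun θ : ℝ => Real.sin (θ + b)) p := by fun_prop
    have hev : ∀ᶠ θ in nhds p, Real.sin (θ + b) < 0 :=
      hc.eventually_lt_const h
    refine eventually_nhdsWithin_of_eventually_nhds (hev.mono fun θ hθ => ?_)
    rw [epsL, if_neg (ne_of_lt h), if_neg (not_lt.mpr (le_of_lt h)), abs_of_neg hθ]
    ring
  · refine Filter.eventually_of_mem (Ioo_mem_nhdsLT (show p - π < p by linarith [Real.pi_pos])) ?_
    intro θ hθ
    have h1 : θ + b = (θ - p) + (p + b) := by ring
    rw [epsL, if_pos h, h1, Real.sin_add, h, mul_zero, add_zero]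
    have hs : Real.sin (θ - p) < 0 :=
      Real.sin_neg_of_neg_of_neg_pi_lt (by linarith [hθ.2]) (by linarith [hθ.1])
    rcases cos_one_or_neg_one h with h2 | h2 <;> simp [h2, abs_of_neg hs]
  · have hc : ContinuousAt (fun θ : ℝ => Real.sin (θ + b)) p := by fun_prop
    have hev : ∀ᶠ θ in nhds p, 0 < Real.sin (θ + b) :=
      hc.eventually_const_lt h
    refine eventually_nhdsWithin_of_eventually_nhds (hev.mono fun θ hθ => ?_)
    rw [epsL, if_neg (ne_of_gt h), if_pos h, abs_of_pos hθ, one_mul]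

lemma epsR_at (p b : ℝ) : epsR p b * Real.sin (p + b) = |Real.sin (p + b)| := by
  rw [epsR]
  split_ifs with h1 h2
  · simp [h1]
  · rw [abs_of_pos h2, one_mul]
  · rw [abs_of_neg ((le_of_not_gt h2).lt_of_ne h1)]; ring

lemma epsL_at (p b : ℝ) : epsL p b * Real.sin (p + b) = |Real.sin (p + b)| := by
  rw [epsL]
  split_ifs with h1 h2
  · simp [h1]
  · rw [abs_of_pos h2, one_mul]
  · rw [abs_of_neg ((le_of_not_gt h2).lt_of_ne h1)]; ring

lemma jumpval (p b : ℝ) :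
    epsR p b * Real.cos (p + b) - epsL p b * Real.cos (p + b)
      = if Real.sin (p + b) = 0 then 2 else 0 := by
  rw [epsR, epsL]
  split_ifs with h h2
  · nlinarith [Real.sin_sq_add_cos_sq (p + b)]
  · ring
  · ring

section Generic

variable {k : ℕ} (c b : Fin k → ℝ) (H : ℝ → ℝ)

lemma sinusoid_hasDerivAt (e : Fin k → ℝ) (θ : ℝ) :
    HasDerivAt (fun θ => ∑ j, c j * e j * Real.sin (θ + b j))
      (∑ j, c j * e j * Real.cos (θ + b j)) θ := by
  apply HasDerivAt.fun_sum
  intro j _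
  have h1 : HasDerivAt (fun θ : ℝ => Real.sin (θ + b j)) (Real.cos (θ + b j)) θ := by
    simpa [Function.comp_def] using (Real.hasDerivAt_sin (θ + b j)).comp θ ((hasDerivAt_id θ).add_const (b j))
  simpa [mul_assoc] using h1.const_mul (c j * e j)

lemma right_side (hH : ∀ θ, H θ = ∑ j, c j * |Real.sin (θ + b j)|) (p : ℝ) :
    HasDerivWithinAt H (∑ j, c j * epsR p (b j) * Real.cos (p + b j)) (Set.Ici p) p ∧
    Tendsto (deriv H) (nhdsWithin p (Set.Ioi p))
      (nhds (∑ j, c j * epsR p (b j) * Real.cos (p + b j))) := by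
  set G : ℝ → ℝ := fun θ => ∑ j, c j * epsR p (b j) * Real.sin (θ + b j) with hG
  have hGd : ∀ θ, HasDerivAt G (∑ j, c j * epsR p (b j) * Real.cos (θ + b j)) θ :=
    fun θ => sinusoid_hasDerivAt c b (fun j => epsR p (b j)) θ
  have hev : ∀ᶠ θ in nhdsWithin p (Set.Ioi p), H θ = G θ := by
    have h1 : ∀ᶠ θ in nhdsWithin p (Set.Ioi p),
        ∀ j, |Real.sin (θ + b j)| = epsR p (b j) * Real.sin (θ + b j) :=
      Filter.eventually_all.2 fun j => epsR_spec p (b j)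
    filter_upwards [h1] with θ hθ
    rw [hH]
    exact Finset.sum_congr rfl fun j _ => by rw [hθ j, ← mul_assoc]
  obtain ⟨q, hq, hsub⟩ := mem_nhdsGT_iff_exists_Ioo_subset.1 hev
  have hqp : p < q := hq
  have hedge : ∀ θ ∈ Set.Ico p q, H θ = G θ := by
    intro θ hθ
    rcases eq_or_lt_of_le hθ.1 with h | h
    · rw [hH]
      exact Finset.sum_congr rfl fun j _ => by rw [← h, ← epsR_at p (b j), ← mul_assoc]
    · exact hsub ⟨h, hθ.2⟩
  constructor
  · have hDW := (hGd p).hasDerivWithinAt (s := Set.Ici p)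
    exact hDW.congr_of_eventuallyEq
      (Filter.eventually_of_mem (Ico_mem_nhdsGE hqp) hedge)
      (hedge p ⟨le_refl p, hqp⟩)
  · have hderiv : ∀ᶠ θ in nhdsWithin p (Set.Ioi p),
        (fun θ => ∑ j, c j * epsR p (b j) * Real.cos (θ + b j)) θ = deriv H θ := by
      refine Filter.eventually_of_mem (Ioo_mem_nhdsGT_of_mem ⟨le_refl p, hqp⟩) ?_
      intro θ hθ
      have hloc : H =ᶠ[nhds θ] G :=
        Filter.eventually_of_mem (isOpen_Ioo.mem_nhds hθ) fun y hy => hsub hy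
      rw [hloc.deriv_eq, (hGd θ).deriv]
    have hcont : Tendsto (fun θ => ∑ j, c j * epsR p (b j) * Real.cos (θ + b j))
        (nhdsWithin p (Set.Ioi p)) (nhds (∑ j, c j * epsR p (b j) * Real.cos (p + b j))) := by
      apply ContinuousWithinAt.tendsto
      apply Continuous.continuousWithinAt
      fun_prop
    exact hcont.congr' hderiv

lemma left_side (hH : ∀ θ, H θ = ∑ j, c j * |Real.sin (θ + b j)|) (p : ℝ) :
    HasDerivWithinAt H (∑ j, c j * epsL p (b j) * Real.cos (p + b j)) (Set.Iic p) p ∧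
    Tendsto (deriv H) (nhdsWithin p (Set.Iio p))
      (nhds (∑ j, c j * epsL p (b j) * Real.cos (p + b j))) := by
  set G : ℝ → ℝ := fun θ => ∑ j, c j * epsL p (b j) * Real.sin (θ + b j) with hG
  have hGd : ∀ θ, HasDerivAt G (∑ j, c j * epsL p (b j) * Real.cos (θ + b j)) θ :=
    fun θ => sinusoid_hasDerivAt c b (fun j => epsL p (b j)) θ
  have hev : ∀ᶠ θ in nhdsWithin p (Set.Iio p), H θ = G θ := by
    have h1 : ∀ᶠ θ in nhdsWithin p (Set.Iio p),
        ∀ j, |Real.sin (θ + b j)| = epsL p (b j) * Real.sin (θ + b j) :=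
      Filter.eventually_all.2 fun j => epsL_spec p (b j)
    filter_upwards [h1] with θ hθ
    rw [hH]
    exact Finset.sum_congr rfl fun j _ => by rw [hθ j, ← mul_assoc]
  obtain ⟨q, hq, hsub⟩ := mem_nhdsLT_iff_exists_Ioo_subset.1 hev
  have hqp : q < p := hq
  have hedge : ∀ θ ∈ Set.Ioc q p, H θ = G θ := by
    intro θ hθ
    rcases eq_or_lt_of_le hθ.2 with h | h
    · rw [hH]
      exact Finset.sum_congr rfl fun j _ => by rw [h, ← epsL_at p (b j), ← mul_assoc]
    · exact hsub ⟨hθ.1, h⟩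
  constructor
  · have hDW := (hGd p).hasDerivWithinAt (s := Set.Iic p)
    exact hDW.congr_of_eventuallyEq
      (Filter.eventually_of_mem (Ioc_mem_nhdsLE hqp) hedge)
      (hedge p ⟨hqp, le_refl p⟩)
  · have hderiv : ∀ᶠ θ in nhdsWithin p (Set.Iio p),
        (fun θ => ∑ j, c j * epsL p (b j) * Real.cos (θ + b j)) θ = deriv H θ := by
      refine Filter.eventually_of_mem (Ioo_mem_nhdsLT hqp) ?_
      intro θ hθ
      have hloc : H =ᶠ[nhds θ] G :=
        Filter.eventually_of_mem (isOpen_Ioo.mem_nhds hθ) fun y hy => hsub hy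
      rw [hloc.deriv_eq, (hGd θ).deriv]
    have hcont : Tendsto (fun θ => ∑ j, c j * epsL p (b j) * Real.cos (θ + b j))
        (nhdsWithin p (Set.Iio p)) (nhds (∑ j, c j * epsL p (b j) * Real.cos (p + b j))) := by
      apply ContinuousWithinAt.tendsto
      apply Continuous.continuousWithinAt
      fun_prop
    exact hcont.congr' hderiv

lemma jump_sum (p : ℝ) :
    (∑ j, c j * epsR p (b j) * Real.cos (p + b j))
      - (∑ j, c j * epsL p (b j) * Real.cos (p + b j))
      = ∑ j, (if Real.sin (p + b j) = 0 then 2 * c j else 0) := by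
  rw [← Finset.sum_sub_distrib]
  refine Finset.sum_congr rfl fun j _ => ?_
  have h := jumpval p (b j)
  have h2 : c j * epsR p (b j) * Real.cos (p + b j) - c j * epsL p (b j) * Real.cos (p + b j)
      = c j * (epsR p (b j) * Real.cos (p + b j) - epsL p (b j) * Real.cos (p + b j)) := by ring
  rw [h2, h]
  split_ifs <;> ring

lemma not_diff (hH : ∀ θ, H θ = ∑ j, c j * |Real.sin (θ + b j)|)
    (hc0 : ∀ j, 0 ≤ c j) (p : ℝ) (j₀ : Fin k)
    (hsin0 : Real.sin (p + b j₀) = 0) (hcpos : 0 < c j₀) :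
    ¬ DifferentiableAt ℝ H p := by
  intro hd
  obtain ⟨hR, -⟩ := right_side c b H hH p
  obtain ⟨hL, -⟩ := left_side c b H hH p
  have e1 := hR.derivWithin (uniqueDiffOn_Ici p p Set.self_mem_Ici)
  have e2 := (hd.hasDerivAt.hasDerivWithinAt (s := Set.Ici p)).derivWithin
    (uniqueDiffOn_Ici p p Set.self_mem_Ici)
  have e3 := hL.derivWithin (uniqueDiffOn_Iic p p Set.self_mem_Iic)
  have e4 := (hd.hasDerivAt.hasDerivWithinAt (s := Set.Iic p)).derivWithin
    (uniqueDiffOn_Iic p p Set.self_mem_Iic)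
  have heq : (∑ j, c j * epsR p (b j) * Real.cos (p + b j))
      = (∑ j, c j * epsL p (b j) * Real.cos (p + b j)) := by
    rw [← e1, ← e3, e2, e4]
  have hpos : 0 < ∑ j, (if Real.sin (p + b j) = 0 then 2 * c j else 0) := by
    refine Finset.sum_pos' (fun j _ => ?_) ⟨j₀, Finset.mem_univ j₀, ?_⟩
    · split_ifs with h
      · linarith [hc0 j]
      · exact le_rfl
    · rw [if_pos hsin0]; linarith
  have := jump_sum c b p
  rw [heq, sub_self] at this
  linarith

end Generic

theorem length_from_height_jumps
    (k n : ℕ) (z : Fin k → ℂ)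
    (H : ℝ → ℝ)
    (hH : ∀ θ : ℝ, H θ = ∑ j, |(Complex.exp (θ * Complex.I) * z j).im|)
    (t : Fin n → ℝ) (ht : Function.Injective t)
    (hsing : {θ : ℝ | θ ∈ Set.Ioc 0 Real.pi ∧ ¬ DifferentiableAt ℝ H θ}
        = Set.range t) :
    ∃ Lplus Lminus : Fin n → ℝ,
      (∀ l, Tendsto (deriv H) (nhdsWithin (t l) (Set.Ioi (t l))) (nhds (Lplus l)) ∧
            Tendsto (deriv H) (nhdsWithin (t l) (Set.Iio (t l))) (nhds (Lminus l))) ∧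
      ∑ j, ‖z j‖ = (1 / 2) * ∑ l, (Lplus l - Lminus l) := by
  classical
  set c : Fin k → ℝ := fun j => ‖z j‖ with hc
  set b : Fin k → ℝ := fun j => Complex.arg (z j) with hb
  have hc0 : ∀ j, 0 ≤ c j := fun j => norm_nonneg (z j)
  have him : ∀ (w : ℂ) (θ : ℝ), (Complex.exp (θ * Complex.I) * w).im
      = ‖w‖ * Real.sin (θ + Complex.arg w) := by
    intro w θ
    have h1 := Complex.norm_mul_cos_arg w
    have h2 := Complex.norm_mul_sin_arg w
    rw [Complex.mul_im, Real.sin_add]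
    simp only [Complex.exp_mul_I, Complex.add_re, Complex.add_im, Complex.mul_re, Complex.mul_im,
      Complex.I_re, Complex.I_im, Complex.cos_ofReal_re, Complex.sin_ofReal_re,
      Complex.cos_ofReal_im, Complex.sin_ofReal_im]
    linear_combination (-(Real.cos θ)) * h2 + (-(Real.sin θ)) * h1
  have hH' : ∀ θ, H θ = ∑ j, c j * |Real.sin (θ + b j)| := by
    intro θ
    rw [hH]
    refine Finset.sum_congr rfl fun j _ => ?_
    simp only [hc, hb]
    rw [him (z j) θ, abs_mul, _root_.abs_of_nonneg (norm_nonneg (z j))]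
  refine ⟨fun l => ∑ j, c j * epsR (t l) (b j) * Real.cos (t l + b j),
          fun l => ∑ j, c j * epsL (t l) (b j) * Real.cos (t l + b j),
          fun l => ⟨(right_side c b H hH' (t l)).2, (left_side c b H hH' (t l)).2⟩, ?_⟩
  have hIoc : ∀ l, t l ∈ Set.Ioc 0 π := by
    intro l
    have h1 : t l ∈ {θ : ℝ | θ ∈ Set.Ioc 0 π ∧ ¬ DifferentiableAt ℝ H θ} := by
      rw [hsing]; exact ⟨l, rfl⟩
    exact h1.1
  have huniq : ∀ (j : Fin k) (l₁ l₂ : Fin n), Real.sin (t l₁ + b j) = 0 →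
      Real.sin (t l₂ + b j) = 0 → l₁ = l₂ := by
    intro j l₁ l₂ h1 h2
    obtain ⟨n₁, hn₁⟩ := Real.sin_eq_zero_iff.1 h1
    obtain ⟨n₂, hn₂⟩ := Real.sin_eq_zero_iff.1 h2
    have h3 : ((n₁ - n₂ : ℤ) : ℝ) * π = t l₁ - t l₂ := by push_cast; linarith
    have hb1 := hIoc l₁
    have hb2 := hIoc l₂
    have hd : n₁ - n₂ = 0 := by
      by_contra hd
      have h4 : (n₁ - n₂ ≤ -1) ∨ (1 ≤ n₁ - n₂) := by omega
      rcases h4 with h5 | h5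
      · have h6 : ((n₁ - n₂ : ℤ) : ℝ) ≤ -1 := by exact_mod_cast h5
        nlinarith [Real.pi_pos, hb1.1, hb1.2, hb2.1, hb2.2]
      · have h6 : (1 : ℝ) ≤ ((n₁ - n₂ : ℤ) : ℝ) := by exact_mod_cast h5
        nlinarith [Real.pi_pos, hb1.1, hb1.2, hb2.1, hb2.2]
    apply ht
    rw [hd] at h3
    norm_num at h3
    linarith
  have hcount : ∀ j, (∑ l, if Real.sin (t l + b j) = 0 then 2 * c j else 0) = 2 * c j := by
    intro j
    rcases eq_or_ne (c j) 0 with h0 | h0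
    · simp [h0]
    · set m : ℤ := ⌊b j / π⌋ + 1 with hm
      set p : ℝ := (m : ℝ) * π - b j with hp
      have hmlt : b j / π < (m : ℝ) := by
        rw [hm]; push_cast; exact Int.lt_floor_add_one _
      have hmle : ((m : ℝ) - 1) ≤ b j / π := by
        rw [hm]; push_cast; linarith [Int.floor_le (b j / π)]
      have hppos : 0 < p := by
        have := (div_lt_iff₀ Real.pi_pos).1 hmlt
        rw [hp]; linarith
      have hple : p ≤ π := by
        have := (le_div_iff₀ Real.pi_pos).1 hmle
        rw [hp]; nlinarith [Real.pi_pos]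
      have hsinp : Real.sin (p + b j) = 0 := by
        have h1 : p + b j = (m : ℝ) * π := by rw [hp]; ring
        rw [h1]
        exact Real.sin_int_mul_pi m
      have hnd : ¬ DifferentiableAt ℝ H p :=
        not_diff c b H hH' hc0 p j hsinp (lt_of_le_of_ne (hc0 j) (Ne.symm h0))
      have hpr : p ∈ Set.range t := by rw [← hsing]; exact ⟨⟨hppos, hple⟩, hnd⟩
      obtain ⟨l, hl⟩ := hpr
      rw [Finset.sum_eq_single_of_mem l (Finset.mem_univ l)]
      · rw [if_pos (by rw [hl]; exact hsinp)]
      · intro l' _ hne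
        rw [if_neg]
        intro hs
        exact hne (huniq j l' l hs (by rw [hl]; exact hsinp))
  have hswap : ∑ l, ((∑ j, c j * epsR (t l) (b j) * Real.cos (t l + b j))
      - (∑ j, c j * epsL (t l) (b j) * Real.cos (t l + b j))) = 2 * ∑ j, c j := by
    rw [Finset.sum_congr rfl fun l _ => jump_sum c b (t l), Finset.sum_comm,
      Finset.sum_congr rfl fun j _ => hcount j, Finset.mul_sum]
  rw [hswap]
  ring
end

section
/- Let z₁, …, z_k and w₁, …, w_m be nonzero complex numbers. If Σ_{j=1}^{k} |Im(e^{iθ} z_j)| = Σ_{j=1}^{m} |Im(e^{iθ} w_j)| for every θ ∈ ℝ, then Σ_{j=1}^{k} |z_j| = Σ_{j=1}^{m} |w_j|. -/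
open Complex Real intervalIntegral

lemma abs_sin_periodic : Function.Periodic (fun x => |Real.sin x|) (2 * π) := by
  intro x; simp [Real.sin_add_two_pi]

lemma integral_abs_sin : ∫ x in (0:ℝ)..(2*π), |Real.sin x| = 4 := by
  have h1 : ∫ x in (0:ℝ)..π, |Real.sin x| = 2 := by
    rw [intervalIntegral.integral_congr (g := Real.sin)]
    · simp [integral_sin]; norm_num
    · intro x hx
      rw [Set.uIcc_of_le Real.pi_nonneg] at hx
      exact abs_of_nonneg (Real.sin_nonneg_of_nonneg_of_le_pi hx.1 hx.2)
  have h2 : ∫ x in (π:ℝ)..(2*π), |Real.sin x| = 2 := by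
    rw [intervalIntegral.integral_congr (g := fun x => -Real.sin x)]
    · simp [integral_sin]; norm_num [Real.cos_two_pi]
    · intro x hx
      rw [Set.uIcc_of_le (by linarith [Real.pi_pos])] at hx
      have h := Real.sin_nonpos_of_nonpos_of_neg_pi_le (x := x - 2*π) (by linarith [hx.2]) (by linarith [hx.1])
      rw [Real.sin_sub_two_pi] at h
      simp [abs_of_nonpos h]
  rw [← intervalIntegral.integral_add_adjacent_intervals (b := π)
    (Real.continuous_sin.abs.intervalIntegrable _ _)
    (Real.continuous_sin.abs.intervalIntegrable _ _), h1, h2]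
  norm_num

lemma key (c : ℂ) : ∫ θ in (0:ℝ)..(2*π), |(Complex.exp (θ * Complex.I) * c).im| = 4 * ‖c‖ := by
  have him : ∀ θ : ℝ, (Complex.exp (θ * Complex.I) * c).im
      = ‖c‖ * Real.sin (θ + Complex.arg c) := by
    intro θ
    conv_lhs => rw [← Complex.norm_mul_exp_arg_mul_I c]
    have : Complex.exp (θ * Complex.I) * (((‖c‖ : ℝ) : ℂ) * Complex.exp ((Complex.arg c : ℂ) * Complex.I))
        = ((‖c‖ : ℝ) : ℂ) * Complex.exp (((θ + Complex.arg c : ℝ) : ℂ) * Complex.I) := by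
      rw [Complex.ofReal_add, add_mul, Complex.exp_add]; ring
    rw [this, Complex.im_ofReal_mul, Complex.exp_ofReal_mul_I_im]
  simp only [him, abs_mul, _root_.abs_of_nonneg (norm_nonneg c)]
  rw [intervalIntegral.integral_const_mul]
  rw [intervalIntegral.integral_comp_add_right (fun x => |Real.sin x|), zero_add]
  rw [show (2*π + Complex.arg c) = Complex.arg c + 2*π by ring,
    abs_sin_periodic.intervalIntegral_add_eq (Complex.arg c) 0]
  rw [zero_add, integral_abs_sin]; ring

lemma cont_height (c : ℂ) : Continuous fun θ : ℝ => |(Complex.exp (θ * Complex.I) * c).im| :=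
  (Complex.continuous_im.comp ((Complex.continuous_exp.comp
    (Complex.continuous_ofReal.mul continuous_const)).mul continuous_const)).abs

theorem equal_heights_imply_equal_lengths
    (k m : ℕ) (z : Fin k → ℂ) (w : Fin m → ℂ)
    (hz : ∀ j, z j ≠ 0) (hw : ∀ j, w j ≠ 0)
    (hheights : ∀ θ : ℝ,
      ∑ j, |(Complex.exp (θ * Complex.I) * z j).im|
        = ∑ j, |(Complex.exp (θ * Complex.I) * w j).im|) :
    ∑ j, ‖z j‖ = ∑ j, ‖w j‖ := by
  have hint : (∫ θ in (0:ℝ)..(2*π), ∑ j, |(Complex.exp (θ * Complex.I) * z j).im|)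
      = ∫ θ in (0:ℝ)..(2*π), ∑ j, |(Complex.exp (θ * Complex.I) * w j).im| := by
    congr 1; ext θ; exact hheights θ
  rw [intervalIntegral.integral_finset_sum (fun j _ => (cont_height (z j)).intervalIntegrable _ _),
    intervalIntegral.integral_finset_sum (fun j _ => (cont_height (w j)).intervalIntegrable _ _)]
    at hint
  simp only [key] at hint
  rw [← Finset.mul_sum, ← Finset.mul_sum] at hint
  linarith
end
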